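/- Let X and Y be metric spaces, let μ be a σ-finite Borel measure on X, let B ⊆ X be a Borel set with 0 < μ(B) < ∞, and let W : X × Y → ℝ and g : X × Y → [0,∞) be Borel measurable with W(·,y) μ-integrable on B for every y ∈ Y. Assume that for each fixed x ∈ X the function g(x,·) is an upper gradient of W(x,·) on Y (in the unit-speed formulation), and that for every L ≥ 0 and every 1-Lipschitz curve γ : [0,L] → Y the functions (x,s) ↦ W(x,γ(s)) and (x,s) ↦ g(x,γ(s)) are integrable on B × [0,L] with respect to μ × Lebesgue measure. Define W_B(y) = (1/μ(B)) ∫_B W(x,y) dμ(x) and f(y) = (1/μ(B)) ∫_B |W(x,y) − W_B(y)| dμ(x). Then the function G(y) = (2/μ(B)) ∫_B g(x,y) dμ(x) is an upper gradient of f on Y: for every 1-Lipschitz curve γ : [0,L] → Y one has |f(γ(L)) − f(γ(0))| ≤ (2/μ(B)) ∫_0^L ∫_B g(x,γ(s)) dμ(x) ds. -/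

import Mathlib

/-! Pointwise `||u - a| - |v - b|| ≤ |u - v| + |a - b|`; averaging this with `a, b` the means of
`u, v` shows that the mean oscillation moves by at most `2 ⨍ |u - v|`. For `u = W(·, γ L)` and
`v = W(·, γ 0)` the upper-gradient inequality in `y` bounds `|u - v|` by `∫_0^L g(·, γ t) dt`,
and Fubini moves the average over `B` inside the curve integral. -/

open MeasureTheory Metric Set
open scoped ENNReal NNReal

noncomputable section

/-- `g` is an upper gradient of `u` on the metric space `Z`, in the unit-speed
formulation: for every `L ≥ 0` and every `1`-Lipschitz curve `γ : [0,L] → Z` one has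
`|u (γ L) - u (γ 0)| ≤ ∫_0^L g (γ s) ds`. -/
def IsUpperGradient {Z : Type*} [MetricSpace Z] (u g : Z → ℝ) : Prop :=
  ∀ L : ℝ, 0 ≤ L → ∀ γ : ℝ → Z, LipschitzOnWith 1 γ (Set.Icc 0 L) →
    |u (γ L) - u (γ 0)| ≤ ∫ t in (0:ℝ)..L, g (γ t)

namespace MeasureTheory

variable {X : Type*} [MeasurableSpace X] {ν : Measure X} {u v : X → ℝ}

theorem average_add (hu : Integrable u ν) (hv : Integrable v ν) :
    ⨍ x, (u x + v x) ∂ν = ⨍ x, u x ∂ν + ⨍ x, v x ∂ν :=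
  integral_add hu.to_average hv.to_average

theorem average_sub (hu : Integrable u ν) (hv : Integrable v ν) :
    ⨍ x, (u x - v x) ∂ν = ⨍ x, u x ∂ν - ⨍ x, v x ∂ν :=
  integral_sub hu.to_average hv.to_average

theorem abs_average_le_average_abs : |⨍ x, u x ∂ν| ≤ ⨍ x, |u x| ∂ν :=
  abs_integral_le_integral_abs

theorem average_mono (hu : Integrable u ν) (hv : Integrable v ν) (huv : ∀ x, u x ≤ v x) :
    ⨍ x, u x ∂ν ≤ ⨍ x, v x ∂ν :=
  integral_mono hu.to_average hv.to_average huv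

end MeasureTheory

def meanOscillation {X : Type*} [MeasurableSpace X] (ν : Measure X) (u : X → ℝ) : ℝ :=
  ⨍ x, |u x - ⨍ x', u x' ∂ν| ∂ν

theorem abs_meanOscillation_sub_le {X : Type*} [MeasurableSpace X] {ν : Measure X}
    [IsFiniteMeasure ν] {u v : X → ℝ} (hu : Integrable u ν) (hv : Integrable v ν) :
    |meanOscillation ν u - meanOscillation ν v| ≤ 2 * ⨍ x, |u x - v x| ∂ν := by
  rcases eq_zero_or_neZero ν with rfl | _
  · simp [meanOscillation]
  set a := ⨍ x, u x ∂ν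
  set b := ⨍ x, v x ∂ν
  have hosc : ∀ {w : X → ℝ} (c : ℝ), Integrable w ν → Integrable (fun x => |w x - c|) ν :=
    fun c hw => (hw.sub (integrable_const c)).abs
  have hdiff : Integrable (fun x => |u x - v x|) ν := (hu.sub hv).abs
  have hmean : |a - b| ≤ ⨍ x, |u x - v x| ∂ν :=
    (average_sub hu hv).symm ▸ abs_average_le_average_abs
  have hpt : ∀ x, |(|u x - a| - |v x - b|)| ≤ |u x - v x| + |a - b| := fun x =>
    (abs_abs_sub_abs_le_abs_sub _ _).trans <| by
      rw [show u x - a - (v x - b) = (u x - v x) - (a - b) by ring]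
      exact abs_sub _ _
  calc |meanOscillation ν u - meanOscillation ν v|
      = |⨍ x, (|u x - a| - |v x - b|) ∂ν| := by
        rw [meanOscillation, meanOscillation, ← average_sub (hosc a hu) (hosc b hv)]
    _ ≤ ⨍ x, |(|u x - a| - |v x - b|)| ∂ν := abs_average_le_average_abs
    _ ≤ ⨍ x, (|u x - v x| + |a - b|) ∂ν :=
        average_mono ((hosc a hu).sub (hosc b hv)).abs
          (hdiff.add (integrable_const _)) hpt
    _ = ⨍ x, |u x - v x| ∂ν + |a - b| := by
        rw [average_add hdiff (integrable_const _), average_const]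
    _ ≤ 2 * ⨍ x, |u x - v x| ∂ν := by linarith

section IntervalFubini

variable {X : Type*} [MeasurableSpace X] {ν : Measure X} {F : X → ℝ → ℝ} {L : ℝ}

theorem MeasureTheory.Integrable.intervalIntegral_prod_left (hL : 0 ≤ L)
    (hF : Integrable (fun q : X × ℝ => F q.1 q.2) (ν.prod (volume.restrict (Icc 0 L)))) :
    Integrable (fun x => ∫ t in (0:ℝ)..L, F x t) ν := by
  simp only [intervalIntegral.integral_of_le hL, ← integral_Icc_eq_integral_Ioc]
  exact hF.integral_prod_left

theorem average_intervalIntegral_comm [SFinite ν] (hL : 0 ≤ L)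
    (hF : Integrable (fun q : X × ℝ => F q.1 q.2) (ν.prod (volume.restrict (Icc 0 L)))) :
    ⨍ x, (∫ t in (0:ℝ)..L, F x t) ∂ν = ∫ t in (0:ℝ)..L, ⨍ x, F x t ∂ν := by
  simp only [intervalIntegral.integral_of_le hL, ← integral_Icc_eq_integral_Ioc, average_eq,
    integral_smul]
  rw [integral_integral_swap hF]

end IntervalFubini

theorem upperGradient_of_meanOscillation_general
    {X Y : Type*}
    [MeasurableSpace X]
    [MetricSpace Y]
    (μ : Measure X)
    (B : Set X) (hBfin : μ B < ⊤)
    (W g : X × Y → ℝ)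
    (hWint : ∀ y : Y, IntegrableOn (fun x => W (x, y)) B μ)
    (hupper : ∀ x : X, IsUpperGradient (fun y => W (x, y)) (fun y => g (x, y)))
    (hprodint : ∀ L : ℝ, 0 ≤ L → ∀ γ : ℝ → Y, LipschitzOnWith 1 γ (Set.Icc 0 L) →
      Integrable (fun q : X × ℝ => W (q.1, γ q.2))
        ((μ.restrict B).prod (volume.restrict (Set.Icc 0 L))) ∧
      Integrable (fun q : X × ℝ => g (q.1, γ q.2))
        ((μ.restrict B).prod (volume.restrict (Set.Icc 0 L)))) :
    IsUpperGradient
      (fun y => (μ B).toReal⁻¹ *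
        ∫ x in B, |W (x, y) - (μ B).toReal⁻¹ * ∫ x' in B, W (x', y) ∂μ| ∂μ)
      (fun y => (2 / (μ B).toReal) * ∫ x in B, g (x, y) ∂μ) := by
  intro L hL γ hγ
  have : IsFiniteMeasure (μ.restrict B) := isFiniteMeasure_restrict.mpr hBfin.ne
  have hgI := (hprodint L hL γ hγ).2
  have hf : ∀ y, (μ B).toReal⁻¹ *
      ∫ x in B, |W (x, y) - (μ B).toReal⁻¹ * ∫ x' in B, W (x', y) ∂μ| ∂μ
      = meanOscillation (μ.restrict B) fun x => W (x, y) := fun y => by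
    simp only [meanOscillation, setAverage_eq, measureReal_def, smul_eq_mul]
  have hG : ∀ y, 2 / (μ B).toReal * ∫ x in B, g (x, y) ∂μ = 2 * ⨍ x in B, g (x, y) ∂μ :=
    fun y => by
    rw [setAverage_eq, measureReal_def, smul_eq_mul, div_eq_mul_inv, mul_assoc]
  simp only [hf, hG]
  calc _ ≤ 2 * ⨍ x in B, |W (x, γ L) - W (x, γ 0)| ∂μ :=
        abs_meanOscillation_sub_le (hWint _) (hWint _)
    _ ≤ 2 * ⨍ x in B, (∫ t in (0:ℝ)..L, g (x, γ t)) ∂μ := by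
        gcongr
        exact average_mono ((hWint _).sub (hWint _)).abs (hgI.intervalIntegral_prod_left hL)
          fun x => hupper x L hL γ hγ
    _ = ∫ t in (0:ℝ)..L, 2 * ⨍ x in B, g (x, γ t) ∂μ := by
        rw [average_intervalIntegral_comm hL hgI, intervalIntegral.integral_const_mul]

/-- If `g(x,·)` is a partial upper gradient of `W(x,·)` on `Y` for every `x`, then
`G(y) = (2/μ(B)) ∫_B g(x,y) dμ(x)` is an upper gradient on `Y` of the mean-oscillation
function `f(y) = (1/μ(B)) ∫_B |W(x,y) - W_B(y)| dμ(x)`, where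
`W_B(y) = (1/μ(B)) ∫_B W(x,y) dμ(x)`. -/
theorem upperGradient_of_meanOscillation
    {X Y : Type*}
    [MetricSpace X] [MeasurableSpace X] [BorelSpace X]
    [MetricSpace Y] [MeasurableSpace Y] [BorelSpace Y]
    (μ : Measure X) [SigmaFinite μ]
    (B : Set X) (hBmeas : MeasurableSet B) (hB0 : 0 < μ B) (hBfin : μ B < ⊤)
    (W g : X × Y → ℝ) (hW : Measurable W) (hg : Measurable g)
    (hg0 : ∀ z, 0 ≤ g z)
    (hWint : ∀ y : Y, IntegrableOn (fun x => W (x, y)) B μ)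
    (hupper : ∀ x : X, IsUpperGradient (fun y => W (x, y)) (fun y => g (x, y)))
    (hprodint : ∀ L : ℝ, 0 ≤ L → ∀ γ : ℝ → Y, LipschitzOnWith 1 γ (Set.Icc 0 L) →
      Integrable (fun q : X × ℝ => W (q.1, γ q.2))
        ((μ.restrict B).prod (volume.restrict (Set.Icc 0 L))) ∧
      Integrable (fun q : X × ℝ => g (q.1, γ q.2))
        ((μ.restrict B).prod (volume.restrict (Set.Icc 0 L)))) :
    IsUpperGradient
      (fun y => (μ B).toReal⁻¹ *
        ∫ x in B, |W (x, y) - (μ B).toReal⁻¹ * ∫ x' in B, W (x', y) ∂μ| ∂μ)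
      (fun y => (2 / (μ B).toReal) * ∫ x in B, g (x, y) ∂μ) :=
  upperGradient_of_meanOscillation_general μ B hBfin W g hWint hupper hprodint
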